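/- Let 0 < p ≤ 1. Let {w^k} ⊆ ℝⁿ, {λ^k} ⊆ ℝ^r, {μ_k} ⊆ (0, ∞), and {ε^k} ⊆ ℝⁿ be sequences such that w^k → w*, λ^k → λ*, μ_k → 0, ε^k → 0, λ₁^k > 0 for all k, λ₁* > 0, and for all k the approximate stationarity condition ∇_w G(w^k, λ̄^k) + λ₁^k ∇φ_{μ_k}(w^k) = ε^k holds. If p = 1, assume additionally that λ₁* ≠ |∂G(w*, λ̄*)/∂w_i| for every i ∈ I(w*). Then for every i ∈ I(w*), lim_{k→∞} |(∇²φ_{μ_k}(w^k))_{ii}| = lim_{k→∞} | p ((w_i^k)² + μ_k²)^{p/2 − 1} + p(p−2) (w_i^k)² ((w_i^k)² + μ_k²)^{p/2 − 2} | = ∞. -/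

import Mathlib

open Filter Topology Finset

/-- Partial derivative `∂h/∂wᵢ (w)`. -/
noncomputable def pd {n : ℕ} (h : (Fin n → ℝ) → ℝ) (w : Fin n → ℝ) (i : Fin n) : ℝ :=
  fderiv ℝ h w (Pi.single i 1)

/-! Put `s = wᵢ² + μ² → 0⁺`. The Hessian entry factors as `p s^(p/2-1) (1 + (p-2) wᵢ²/s)` and
`s^(p/2-1) → ∞`, so it suffices that `wᵢ²/s` has a limit `L` with `1 + (p-2) L > 0`.
Stationarity makes `t = wᵢ s^(p/2-1)` converge to `T = -∂ᵢG(w*, λ̄*)/(λ₁* p)`, and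
`wᵢ²/s = t² s^(1-p)`. For `p < 1` this tends to `0`; for `p = 1` it equals `t² ≤ 1`, so
`T² ≤ 1`, and assumption A3 says precisely that `T² ≠ 1`. -/

section PartialDerivative

variable {n : ℕ}

theorem pd_add_sum_mul {ι : Type*} {g : (Fin n → ℝ) → ℝ} {R : ι → (Fin n → ℝ) → ℝ}
    {x : Fin n → ℝ} {S : Finset ι} (hg : DifferentiableAt ℝ g x)
    (hR : ∀ j ∈ S, DifferentiableAt ℝ (R j) x) (c : ι → ℝ) (i : Fin n) :
    pd (fun y => g y + ∑ j ∈ S, c j * R j y) x i = pd g x i + ∑ j ∈ S, c j * pd (R j) x i := by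
  have hcR : ∀ j ∈ S, DifferentiableAt ℝ (fun y => c j * R j y) x :=
    fun j hj => (hR j hj).const_mul _
  simp only [pd]
  rw [fderiv_fun_add hg (DifferentiableAt.fun_sum hcR), fderiv_fun_sum hcR,
    Finset.sum_congr rfl fun j hj => fderiv_const_mul (hR j hj) (c j)]
  simp

theorem ContDiff.continuous_pd {h : (Fin n → ℝ) → ℝ} {m : WithTop ℕ∞} (hh : ContDiff ℝ m h)
    (hm : m ≠ 0) (i : Fin n) : Continuous fun x => pd h x i :=
  (hh.continuous_fderiv hm).clm_apply continuous_const

theorem tendsto_pd_add_sum_mul {ι α : Type*} {l : Filter α} {m : WithTop ℕ∞}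
    {g : (Fin n → ℝ) → ℝ} {R : ι → (Fin n → ℝ) → ℝ} (hg : ContDiff ℝ m g)
    (hR : ∀ j, ContDiff ℝ m (R j)) (hm : m ≠ 0) (S : Finset ι)
    {x : α → Fin n → ℝ} {x₀ : Fin n → ℝ} {c : α → ι → ℝ} {c₀ : ι → ℝ}
    (hx : Tendsto x l (𝓝 x₀)) (hc : ∀ j, Tendsto (fun k => c k j) l (𝓝 (c₀ j))) (i : Fin n) :
    Tendsto (fun k => pd (fun y => g y + ∑ j ∈ S, c k j * R j y) (x k) i) l
      (𝓝 (pd (fun y => g y + ∑ j ∈ S, c₀ j * R j y) x₀ i)) := by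
  have hdiff : ∀ (c' : ι → ℝ) x, pd (fun y => g y + ∑ j ∈ S, c' j * R j y) x i
      = pd g x i + ∑ j ∈ S, c' j * pd (R j) x i := fun c' x =>
    pd_add_sum_mul (hg.differentiable hm x) (fun j _ => (hR j).differentiable hm x) c' i
  simp only [hdiff]
  have hpd : ∀ h : (Fin n → ℝ) → ℝ, ContDiff ℝ m h →
      Tendsto (fun k => pd h (x k) i) l (𝓝 (pd h x₀ i)) :=
    fun h hh => ((hh.continuous_pd hm i).tendsto x₀).comp hx
  exact (hpd g hg).add (tendsto_finsetSum S fun j _ => (hc j).mul (hpd (R j) (hR j)))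

end PartialDerivative

theorem tendsto_of_add_mul_eq {α : Type*} {l : Filter α} {a b t e : α → ℝ} {a₀ b₀ e₀ : ℝ}
    (ha : Tendsto a l (𝓝 a₀)) (hb : Tendsto b l (𝓝 b₀)) (he : Tendsto e l (𝓝 e₀))
    (hb₀ : b₀ ≠ 0) (h : ∀ k, a k + b k * t k = e k) :
    Tendsto t l (𝓝 ((e₀ - a₀) / b₀)) := by
  refine ((he.sub ha).div hb hb₀).congr' ?_
  filter_upwards [hb.eventually_ne hb₀] with k hbk
  rw [Pi.div_apply, ← h k]
  field_simp
  ring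

section SmoothingHessian

variable {α : Type*} {l : Filter α} {p : ℝ}

theorem smoothing_hessian_eq_mul {s : ℝ} (hs : s ≠ 0) (x : ℝ) :
    p * s ^ (p / 2 - 1) + p * (p - 2) * x ^ 2 * s ^ (p / 2 - 2)
      = p * s ^ (p / 2 - 1) * (1 + (p - 2) * (x ^ 2 / s)) := by
  rw [show p / 2 - 2 = p / 2 - 1 - 1 by ring, Real.rpow_sub_one hs (p / 2 - 1)]
  ring

theorem sq_div_eq_sq_mul_rpow {s : ℝ} (hs : 0 < s) (x : ℝ) :
    x ^ 2 / s = (x * s ^ (p / 2 - 1)) ^ 2 * s ^ (1 - p) := by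
  rw [mul_pow, ← Real.rpow_natCast (s ^ _) 2, ← Real.rpow_mul hs.le, mul_assoc,
    ← Real.rpow_add hs, show (p / 2 - 1) * ((2 : ℕ) : ℝ) + (1 - p) = -1 by push_cast; ring,
    Real.rpow_neg_one, div_eq_mul_inv]

theorem exists_tendsto_sq_div_sq_add_sq [l.NeBot] (hp1 : p ≤ 1) {x μ : α → ℝ} {T : ℝ}
    (hs : ∀ k, 0 < x k ^ 2 + μ k ^ 2) (hs₀ : Tendsto (fun k => x k ^ 2 + μ k ^ 2) l (𝓝 0))
    (ht : Tendsto (fun k => x k * (x k ^ 2 + μ k ^ 2) ^ (p / 2 - 1)) l (𝓝 T))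
    (hT : p = 1 → |T| ≠ 1) :
    ∃ L, Tendsto (fun k => x k ^ 2 / (x k ^ 2 + μ k ^ 2)) l (𝓝 L) ∧ 0 < 1 + (p - 2) * L := by
  simp only [sq_div_eq_sq_mul_rpow (p := p) (hs _)]
  rcases hp1.lt_or_eq with hp1 | rfl
  · have hpow : Tendsto (fun k => (x k ^ 2 + μ k ^ 2) ^ (1 - p)) l (𝓝 0) := by
      simpa [Function.comp_def, Real.zero_rpow (sub_pos.2 hp1).ne'] using
        ((Real.continuousAt_rpow_const 0 (1 - p) (Or.inr (sub_pos.2 hp1).le)).tendsto.comp hs₀)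
    exact ⟨0, by simpa using (ht.pow 2).mul hpow, by simp⟩
  · have hq : Tendsto (fun k => (x k * (x k ^ 2 + μ k ^ 2) ^ ((1 : ℝ) / 2 - 1)) ^ 2
        * (x k ^ 2 + μ k ^ 2) ^ (1 - (1 : ℝ))) l (𝓝 (T ^ 2)) := by
      simpa using ht.pow 2
    have hT2 : T ^ 2 ≤ 1 := by
      refine le_of_tendsto hq (.of_forall fun k => ?_)
      rw [← sq_div_eq_sq_mul_rpow (hs k)]
      exact div_le_one_of_le₀ (le_add_of_nonneg_right (sq_nonneg _)) (hs k).le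
    have hT2' : T ^ 2 ≠ 1 := fun h => hT rfl ((pow_eq_one_iff_of_nonneg (abs_nonneg T) two_ne_zero).1 (by rwa [sq_abs]))
    exact ⟨T ^ 2, hq, by linarith [hT2.lt_of_ne hT2']⟩

theorem tendsto_abs_smoothing_hessian_atTop [l.NeBot] (hp : 0 < p) (hp1 : p ≤ 1)
    {x μ : α → ℝ} {T : ℝ} (hμ₀ : ∀ k, μ k ≠ 0) (hx : Tendsto x l (𝓝 0))
    (hμ : Tendsto μ l (𝓝 0))
    (ht : Tendsto (fun k => x k * (x k ^ 2 + μ k ^ 2) ^ (p / 2 - 1)) l (𝓝 T))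
    (hT : p = 1 → |T| ≠ 1) :
    Tendsto (fun k => |p * (x k ^ 2 + μ k ^ 2) ^ (p / 2 - 1)
      + p * (p - 2) * x k ^ 2 * (x k ^ 2 + μ k ^ 2) ^ (p / 2 - 2)|) l atTop := by
  have hs : ∀ k, 0 < x k ^ 2 + μ k ^ 2 := fun k => by have := hμ₀ k; positivity
  have hs₀ : Tendsto (fun k => x k ^ 2 + μ k ^ 2) l (𝓝 0) := by
    simpa using (hx.pow 2).add (hμ.pow 2)
  obtain ⟨L, hqL, hL⟩ := exists_tendsto_sq_div_sq_add_sq hp1 hs hs₀ ht hT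
  have hpow : Tendsto (fun k => (x k ^ 2 + μ k ^ 2) ^ (p / 2 - 1)) l atTop :=
    (tendsto_rpow_neg_nhdsGT_zero (by linarith)).comp
      (tendsto_nhdsWithin_iff.2 ⟨hs₀, .of_forall hs⟩)
  refine tendsto_atTop_mono (fun k => ?_) ((hpow.const_mul_atTop hp).atTop_mul_pos hL
    (tendsto_const_nhds.add (tendsto_const_nhds.mul hqL)))
  rw [smoothing_hessian_eq_mul (hs k).ne']
  exact le_abs_self _

end SmoothingHessian

theorem smoothing_hessian_blowup_general {n r : ℕ} [NeZero r] (p : ℝ)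
    (hp : 0 < p) (hp1 : p ≤ 1)
    (g : (Fin n → ℝ) → ℝ) (R : Fin r → (Fin n → ℝ) → ℝ)
    (hgC : ContDiff ℝ 2 g) (hRC : ∀ i, ContDiff ℝ 2 (R i))
    (G : (Fin n → ℝ) → (Fin r → ℝ) → ℝ)
    (hG : ∀ w lam, G w lam = g w + ∑ i ∈ univ.filter (fun i : Fin r => i ≠ 0), lam i * R i w)
    (wstar : Fin n → ℝ) (lamstar : Fin r → ℝ)
    (w : ℕ → Fin n → ℝ) (lam : ℕ → Fin r → ℝ) (μ : ℕ → ℝ) (eps : ℕ → Fin n → ℝ)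
    (hμpos : ∀ k, 0 < μ k)
    (hw : Tendsto w atTop (nhds wstar))
    (hlam : Tendsto lam atTop (nhds lamstar))
    (hμ : Tendsto μ atTop (nhds 0))
    (heps : Tendsto eps atTop (nhds 0))
    (hlamstar : 0 < lamstar 0)
    -- approximate stationarity: ∇_w G(wᵏ, λ̄ᵏ) + λ₁ᵏ ∇φ_{μₖ}(wᵏ) = εᵏ
    (hstat : ∀ k i, pd (fun x => G x (lam k)) (w k) i
        + lam k 0 * (p * w k i * ((w k i) ^ 2 + (μ k) ^ 2) ^ (p / 2 - 1)) = eps k i)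
    -- A3 (only needed for p = 1)
    (hA3 : p = 1 → ∀ i, wstar i = 0 →
      lamstar 0 ≠ |pd (fun x => G x lamstar) wstar i|) :
    ∀ i, wstar i = 0 →
      Tendsto (fun k =>
          |p * ((w k i) ^ 2 + (μ k) ^ 2) ^ (p / 2 - 1)
            + p * (p - 2) * (w k i) ^ 2 * ((w k i) ^ 2 + (μ k) ^ 2) ^ (p / 2 - 2)|)
        atTop atTop := by
  intro i hi
  have hlam' := tendsto_pi_nhds.1 hlam
  have hpd : Tendsto (fun k => pd (fun x => G x (lam k)) (w k) i) atTop
      (𝓝 (pd (fun x => G x lamstar) wstar i)) := by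
    simp only [hG]
    exact tendsto_pd_add_sum_mul hgC hRC two_ne_zero _ hw hlam' i
  have ht := tendsto_of_add_mul_eq (t := fun k => w k i * (w k i ^ 2 + μ k ^ 2) ^ (p / 2 - 1))
    (e₀ := 0) hpd ((hlam' 0).mul_const p) (tendsto_pi_nhds.1 heps i) (mul_pos hlamstar hp).ne'
    fun k => by linear_combination hstat k i
  refine tendsto_abs_smoothing_hessian_atTop hp hp1 (fun k => (hμpos k).ne')
    (by simpa [hi] using tendsto_pi_nhds.1 hw i) hμ ht fun hp1 => ?_
  rw [hp1, mul_one, zero_sub, abs_div, abs_neg, abs_of_pos hlamstar]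
  exact div_ne_one_of_ne (hA3 hp1 i hi).symm

/-- Proposition 2: for each `i ∈ I(w*)`, the diagonal Hessian entry of
the smoothed function blows up:
`|(∇²φ_{μₖ}(wᵏ))ᵢᵢ| = |p ((wᵢᵏ)² + μₖ²)^{p/2−1} + p(p−2)(wᵢᵏ)²((wᵢᵏ)² + μₖ²)^{p/2−2}| → ∞`. -/
theorem smoothing_hessian_blowup {n r : ℕ} [NeZero r] (p : ℝ)
    (hp : 0 < p) (hp1 : p ≤ 1)
    (g : (Fin n → ℝ) → ℝ) (R : Fin r → (Fin n → ℝ) → ℝ)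
    (hgC : ContDiff ℝ 2 g) (hRC : ∀ i, ContDiff ℝ 2 (R i))
    (G : (Fin n → ℝ) → (Fin r → ℝ) → ℝ)
    (hG : ∀ w lam, G w lam = g w + ∑ i ∈ univ.filter (fun i : Fin r => i ≠ 0), lam i * R i w)
    (wstar : Fin n → ℝ) (lamstar : Fin r → ℝ)
    (w : ℕ → Fin n → ℝ) (lam : ℕ → Fin r → ℝ) (μ : ℕ → ℝ) (eps : ℕ → Fin n → ℝ)
    (hμpos : ∀ k, 0 < μ k)
    (hw : Tendsto w atTop (nhds wstar))
    (hlam : Tendsto lam atTop (nhds lamstar))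
    (hμ : Tendsto μ atTop (nhds 0))
    (heps : Tendsto eps atTop (nhds 0))
    (hlampos : ∀ k, 0 < lam k 0) (hlamstar : 0 < lamstar 0)
    -- approximate stationarity: ∇_w G(wᵏ, λ̄ᵏ) + λ₁ᵏ ∇φ_{μₖ}(wᵏ) = εᵏ
    (hstat : ∀ k i, pd (fun x => G x (lam k)) (w k) i
        + lam k 0 * (p * w k i * ((w k i) ^ 2 + (μ k) ^ 2) ^ (p / 2 - 1)) = eps k i)
    -- A3 (only needed for p = 1)
    (hA3 : p = 1 → ∀ i, wstar i = 0 →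
      lamstar 0 ≠ |pd (fun x => G x lamstar) wstar i|) :
    ∀ i, wstar i = 0 →
      Tendsto (fun k =>
          |p * ((w k i) ^ 2 + (μ k) ^ 2) ^ (p / 2 - 1)
            + p * (p - 2) * (w k i) ^ 2 * ((w k i) ^ 2 + (μ k) ^ 2) ^ (p / 2 - 2)|)
        atTop atTop :=
  smoothing_hessian_blowup_general p hp hp1 g R hgC hRC G hG wstar lamstar w lam μ eps hμpos hw hlam
    hμ heps hlamstar hstat hA3
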